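/- arXiv:1708.06913 — 4 statements merged into one kernel-verified Lean document; each statement's English description precedes it below -/
import Mathlib

section
/- Let n ≥ 1 and let α_1, …, α_n be positive integers. A subset C of ∏_{i=1}^n Z_{2^i}^{α_i} is a ∏_{i=1}^n Z_{2^i}-additive cyclic code if and only if, under the polynomial identification, C is a Z_{2^n}[x]-submodule of R_{α_1,…,α_n} = ∏_{i=1}^n Z_{2^i}[x]/⟨x^{α_i}−1⟩. -/
open Polynomial

noncomputable section

/-- The ambient space `∏_{i=1}^n Z_{2^i}^{α_i}` (0-indexed: block `i` has entries in
`Z_{2^{i+1}}`). -/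
abbrev Amb (n : ℕ) (α : Fin n → ℕ) := ∀ i : Fin n, Fin (α i) → ZMod (2 ^ (i.1 + 1))

/-- The simultaneous cyclic shift `T`: each block is shifted cyclically,
`T(v)_{i,j} = v_{i,j-1}` (indices mod `α i`). -/
def shiftT {n : ℕ} {α : Fin n → ℕ} (v : Amb n α) : Amb n α :=
  fun i j => v i ((finRotate (α i)).symm j)

/-- The `i`-th component ring `Z_{2^{i+1}}[x]/⟨x^{α_i} − 1⟩` of `R_{α_1,…,α_n}`. -/
abbrev RqC (n : ℕ) (α : Fin n → ℕ) (i : Fin n) :=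
  Polynomial (ZMod (2 ^ (i.1 + 1))) ⧸
    Ideal.span {(X : Polynomial (ZMod (2 ^ (i.1 + 1)))) ^ (α i) - 1}

/-- `R_{α_1,…,α_n} = ∏_{i=1}^n Z_{2^i}[x]/⟨x^{α_i}−1⟩`. -/
abbrev Rq (n : ℕ) (α : Fin n → ℕ) := ∀ i : Fin n, RqC n α i

/-- The quotient projection `Z_{2^{i+1}}[x] → Z_{2^{i+1}}[x]/⟨x^{α_i} − 1⟩`. -/
def mkR (n : ℕ) (α : Fin n → ℕ) (i : Fin n) :
    Polynomial (ZMod (2 ^ (i.1 + 1))) →+* RqC n α i :=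
  Ideal.Quotient.mk _

/-- The natural projection `Z_{2^n} → Z_{2^{i+1}}`. -/
def projZ (n : ℕ) (i : Fin n) : ZMod (2 ^ n) →+* ZMod (2 ^ (i.1 + 1)) :=
  ZMod.castHom (pow_dvd_pow 2 i.isLt) (ZMod (2 ^ (i.1 + 1)))

/-- The scalar multiplication `d(x) * (u_1(x), …, u_n(x)) =
(d(x)u_1(x) mod 2, …, d(x)u_n(x) mod 2^n)` making `R_{α_1,…,α_n}` a
`Z_{2^n}[x]`-module. -/
def psmul {n : ℕ} {α : Fin n → ℕ} (d : Polynomial (ZMod (2 ^ n))) (u : Rq n α) :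
    Rq n α :=
  fun i => mkR n α i (d.map (projZ n i)) * u i

/-- The polynomial identification `(v_1, …, v_n) ↦ (v_1(x), …, v_n(x))`,
`v_i(x) = Σ_j v_{i(j+1)} x^j`. -/
def toPoly {n : ℕ} {α : Fin n → ℕ} (v : Amb n α) : Rq n α :=
  fun i => mkR n α i (∑ j : Fin (α i), Polynomial.monomial j.1 (v i j))

/-! The polynomial identification is additive and injective, since a vector of length `α_i` is
the coefficient vector of the unique residue of degree `< α_i` modulo `x^{α_i} - 1`; it turns
the shift `T` into multiplication by `x`, because `x^{α_i} = 1` wraps the top coefficient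
around. Hence an additive cyclic code is closed under `x` and under addition, so under every
`d(x)` (constants act as repeated addition); conversely `-1` and `x` recover negation and `T`. -/

namespace Polynomial

variable {R : Type*} [CommRing R] {m : ℕ}

theorem coeff_sum_monomial_fin (v : Fin m → R) (k : Fin m) :
    (∑ j : Fin m, monomial j.1 (v j)).coeff k = v k := by
  simp [coeff_monomial, Fin.val_eq_val]

theorem degree_sum_monomial_fin_lt (v : Fin m → R) :
    (∑ j : Fin m, monomial j.1 (v j)).degree < m := by
  simpa only [C_mul_X_pow_eq_monomial] using degree_sum_fin_lt v

theorem eq_of_X_pow_sub_one_dvd_sub {p q : R[X]} (hp : p.degree < m) (hq : q.degree < m)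
    (h : X ^ m - 1 ∣ p - q) : p = q := by
  nontriviality R
  rcases Nat.eq_zero_or_pos m with rfl | hm
  · simp_all
  have hmonic : (X ^ m - 1 : R[X]).Monic := by
    simpa using monic_X_pow_sub_C (1 : R) hm.ne'
  have hdeg : (p - q).degree < (X ^ m - 1 : R[X]).degree := by
    rw [show (X ^ m - 1 : R[X]) = X ^ m - C 1 by simp, degree_X_pow_sub_C hm]
    exact (degree_sub_le p q).trans_lt (max_lt hp hq)
  rw [← sub_eq_zero, ← (modByMonic_eq_self_iff hmonic).mpr hdeg]
  exact (modByMonic_eq_zero_iff_dvd hmonic).mpr h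

theorem mk_sum_monomial_fin_injective :
    Function.Injective fun v : Fin m → R =>
      Ideal.Quotient.mk (Ideal.span {X ^ m - 1}) (∑ j : Fin m, monomial j.1 (v j)) := by
  intro v w h
  have hvw := eq_of_X_pow_sub_one_dvd_sub (degree_sum_monomial_fin_lt v)
    (degree_sum_monomial_fin_lt w) (Ideal.mem_span_singleton.mp (Ideal.Quotient.eq.mp h))
  funext k
  simpa only [coeff_sum_monomial_fin] using congr_arg (coeff · k) hvw

theorem mk_X_pow_mod (a : ℕ) :
    Ideal.Quotient.mk (Ideal.span {X ^ m - 1}) (X ^ a : R[X]) =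
      Ideal.Quotient.mk (Ideal.span {X ^ m - 1}) (X ^ (a % m)) := by
  have hXm : Ideal.Quotient.mk (Ideal.span {X ^ m - 1}) (X ^ m : R[X]) = 1 := by
    rw [← map_one (Ideal.Quotient.mk _), Ideal.Quotient.eq]
    exact Ideal.subset_span rfl
  conv_lhs =>
    rw [← Nat.div_add_mod a m, pow_add, pow_mul, map_mul, map_pow, hXm, one_pow, one_mul]

theorem mk_X_mul_sum_monomial_fin (v : Fin m → R) :
    Ideal.Quotient.mk (Ideal.span {X ^ m - 1}) (X * ∑ j : Fin m, monomial j.1 (v j)) =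
      Ideal.Quotient.mk (Ideal.span {X ^ m - 1})
        (∑ j : Fin m, monomial j.1 (v ((finRotate m).symm j))) := by
  conv_rhs => rw [← Equiv.sum_comp (finRotate m)]
  rw [Finset.mul_sum, map_sum, map_sum]
  refine Finset.sum_congr rfl fun k _ => ?_
  have : NeZero m := k.neZero
  rw [Equiv.symm_apply_apply, X_mul_monomial, ← C_mul_X_pow_eq_monomial,
    ← C_mul_X_pow_eq_monomial, map_mul, map_mul, mk_X_pow_mod, finRotate_apply, Fin.val_add,
    Fin.val_one', Nat.add_mod_mod]

end Polynomial

section CyclicCode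

variable {n : ℕ} {α : Fin n → ℕ}

theorem toPoly_add (u v : Amb n α) : toPoly (u + v) = toPoly u + toPoly v := by
  funext i
  simp only [toPoly, Pi.add_apply, map_add, Finset.sum_add_distrib]

def toPolyAddHom : Amb n α →+ Rq n α := AddMonoidHom.mk' toPoly toPoly_add

theorem toPoly_zero : toPoly (0 : Amb n α) = 0 := map_zero toPolyAddHom

theorem toPoly_neg (v : Amb n α) : toPoly (-v) = -toPoly v := map_neg toPolyAddHom v

theorem toPoly_injective : Function.Injective (toPoly : Amb n α → Rq n α) :=
  fun _ _ h => funext fun i => mk_sum_monomial_fin_injective (congr_fun h i)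

theorem psmul_X_toPoly (v : Amb n α) : psmul X (toPoly v) = toPoly (shiftT v) := by
  funext i
  simpa [psmul, toPoly, mkR, shiftT] using mk_X_mul_sum_monomial_fin (v i)

theorem psmul_add_left (p q : (ZMod (2 ^ n))[X]) (u : Rq n α) :
    psmul (p + q) u = psmul p u + psmul q u := by
  funext i
  simp only [psmul, Polynomial.map_add, map_add, add_mul, Pi.add_apply]

theorem psmul_mul (p q : (ZMod (2 ^ n))[X]) (u : Rq n α) :
    psmul (p * q) u = psmul p (psmul q u) := by
  funext i
  simp only [psmul, Polynomial.map_mul, map_mul, mul_assoc]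

theorem psmul_C (a : ZMod (2 ^ n)) (u : Rq n α) : psmul (C a) u = a.val • u := by
  funext i
  have : NeZero (2 ^ n) := ⟨by positivity⟩
  rw [psmul, Polynomial.map_C, projZ, ZMod.castHom_apply, ← ZMod.natCast_val,
    Polynomial.C_eq_natCast, map_natCast, Pi.smul_apply, nsmul_eq_mul]

theorem psmul_neg_one (u : Rq n α) : psmul (-1) u = -u := by
  funext i
  simp only [psmul, Polynomial.map_neg, Polynomial.map_one, map_neg, map_one, Pi.neg_apply]
  exact neg_one_mul (u i)

theorem AddSubmonoid.psmul_mem (S : AddSubmonoid (Rq n α))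
    (hX : ∀ u ∈ S, psmul X u ∈ S) (d : (ZMod (2 ^ n))[X]) {u : Rq n α} (hu : u ∈ S) :
    psmul d u ∈ S := by
  induction d using Polynomial.induction_on generalizing u with
  | C a => exact psmul_C a u ▸ S.nsmul_mem hu _
  | add p q hp hq => exact psmul_add_left p q u ▸ S.add_mem (hp hu) (hq hu)
  | monomial k a ih =>
    rw [pow_succ, ← mul_assoc, psmul_mul]
    exact ih (hX u hu)

end CyclicCode

theorem stmt_0_general (n : ℕ) (α : Fin n → ℕ)
    (C : Set (Amb n α)) :
    ((0 ∈ C) ∧ (∀ u v, u ∈ C → v ∈ C → u + v ∈ C) ∧ (∀ u, u ∈ C → -u ∈ C) ∧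
      (∀ u, u ∈ C → shiftT u ∈ C)) ↔
    ((0 ∈ toPoly '' C) ∧
      (∀ u v, u ∈ toPoly '' C → v ∈ toPoly '' C → u + v ∈ toPoly '' C) ∧
      (∀ (d : Polynomial (ZMod (2 ^ n))) u, u ∈ toPoly '' C → psmul d u ∈ toPoly '' C)) := by
  constructor
  · rintro ⟨h0, hadd, -, hshift⟩
    let S := (AddSubmonoid.mk ⟨C, hadd _ _⟩ h0).map (toPolyAddHom (α := α))
    refine ⟨S.zero_mem, fun _ _ => S.add_mem, fun d _ hu => S.psmul_mem ?_ d hu⟩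
    rintro _ ⟨v, hv, rfl⟩
    exact ⟨shiftT v, hshift v hv, (psmul_X_toPoly v).symm⟩
  · rintro ⟨h0, hadd, hsmul⟩
    have hmem (w : Amb n α) : toPoly w ∈ toPoly '' C → w ∈ C :=
      toPoly_injective.mem_set_image.mp
    refine ⟨hmem 0 ?_, fun u v hu hv => hmem (u + v) ?_, fun u hu => hmem (-u) ?_,
      fun u hu => hmem (shiftT u) ?_⟩
    · exact toPoly_zero ▸ h0
    · exact toPoly_add u v ▸ hadd _ _ ⟨u, hu, rfl⟩ ⟨v, hv, rfl⟩
    · exact toPoly_neg u ▸ psmul_neg_one (toPoly u) ▸ hsmul (-1) _ ⟨u, hu, rfl⟩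
    · exact psmul_X_toPoly u ▸ hsmul X _ ⟨u, hu, rfl⟩

/-- `C` is a `∏ Z_{2^i}`-additive cyclic code (an additive subgroup
closed under the simultaneous shift `T`) iff, under the polynomial identification,
`C` is a `Z_{2^n}[x]`-submodule of `R_{α_1,…,α_n}`. -/
theorem stmt_0 (n : ℕ) (hn : 1 ≤ n) (α : Fin n → ℕ) (hα : ∀ i, 0 < α i)
    (C : Set (Amb n α)) :
    ((0 ∈ C) ∧ (∀ u v, u ∈ C → v ∈ C → u + v ∈ C) ∧ (∀ u, u ∈ C → -u ∈ C) ∧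
      (∀ u, u ∈ C → shiftT u ∈ C)) ↔
    ((0 ∈ toPoly '' C) ∧
      (∀ u v, u ∈ toPoly '' C → v ∈ toPoly '' C → u + v ∈ toPoly '' C) ∧
      (∀ (d : Polynomial (ZMod (2 ^ n))) u, u ∈ toPoly '' C → psmul d u ∈ toPoly '' C)) :=
  stmt_0_general n α C
end
end

section
/- Let C be a ∏_{i=1}^n Z_{2^i}-additive cyclic code in ∏_{i=1}^n Z_{2^i}^{α_i}. Then its dual C^⊥ with respect to the inner product u·v = [Σ_{i=1}^n 2^{n−i} Σ_{j=1}^{α_i} u_{ij} v_{ij}] mod 2^n is also a ∏_{i=1}^n Z_{2^i}-additive cyclic code; that is, C^⊥ is an additive subgroup closed under the cyclic shift T. -/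
/-- The inner product `u·v = [Σ_i 2^{n−i} Σ_j u_{ij} v_{ij}] mod 2^n`, entries lifted
to the integers. -/
def innerZ {n : ℕ} {α : Fin n → ℕ} (u v : Amb n α) : ZMod (2 ^ n) :=
  ∑ i : Fin n, (2 : ZMod (2 ^ n)) ^ (n - 1 - i.1) *
    ∑ j : Fin (α i), ((u i j).val : ZMod (2 ^ n)) * ((v i j).val : ZMod (2 ^ n))

/-!
Entries of block `i` live in `Z_{2^{i+1}}` but are weighted by `2^{n-1-i}`, and
`2^{i+1} · 2^{n-1-i} = 2^n = 0` in `Z_{2^n}`; so the error made by lifting a sum of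
entries to the integers is killed by the weight, and `v ↦ u · v` is additive. Hence
`C^⊥` is a subgroup. The shift permutes the coordinates of every block, so
`T u · T v = u · v`; as `T` is injective on the finite set `C` and maps `C` into itself,
every `u ∈ C` is `T w` with `w ∈ C`, whence `u · T v = w · v = 0` for `v ∈ C^⊥`.
-/

open Finset

lemma ZMod.natCast_val_add_mul_of_natCast_mul_eq_zero {R : Type*} [Semiring R] {m : ℕ}
    [NeZero m] {w : R} (hw : (m : R) * w = 0) (a b : ZMod m) :
    ((a + b).val : R) * w = (a.val : R) * w + (b.val : R) * w := by
  have hdiv := Nat.mod_add_div (a.val + b.val) m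
  rw [← add_mul, ← Nat.cast_add, ← hdiv, ZMod.val_add, Nat.cast_add, Nat.cast_mul, add_mul,
    mul_assoc, (Nat.cast_commute ((a.val + b.val) / m) w).eq, ← mul_assoc, hw, zero_mul, add_zero]

lemma two_pow_succ_mul_weight_eq_zero (n : ℕ) (i : Fin n) :
    ((2 ^ (i.1 + 1) : ℕ) : ZMod (2 ^ n)) * 2 ^ (n - 1 - i.1) = 0 := by
  rw [Nat.cast_pow, Nat.cast_ofNat, ← pow_add, show i.1 + 1 + (n - 1 - i.1) = n by omega]
  exact_mod_cast ZMod.natCast_self (2 ^ n)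

lemma innerZ_add_right {n : ℕ} {α : Fin n → ℕ} (u v w : Amb n α) :
    innerZ u (v + w) = innerZ u v + innerZ u w := by
  simp only [innerZ, ← sum_add_distrib, ← mul_add, mul_sum]
  refine sum_congr rfl fun i _ => sum_congr rfl fun j _ => ?_
  have h := ZMod.natCast_val_add_mul_of_natCast_mul_eq_zero
    (two_pow_succ_mul_weight_eq_zero n i) (v i j) (w i j)
  calc (2 : ZMod (2 ^ n)) ^ (n - 1 - i.1) * ((u i j).val * ((v + w) i j).val)
      = (u i j).val * (((v i j + w i j).val : ZMod (2 ^ n)) * 2 ^ (n - 1 - i.1)) := by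
        rw [Pi.add_apply, Pi.add_apply]; ring
    _ = _ := by rw [h]; ring

def innerZRight {n : ℕ} {α : Fin n → ℕ} (u : Amb n α) : Amb n α →+ ZMod (2 ^ n) :=
  AddMonoidHom.mk' (innerZ u) (innerZ_add_right u)

lemma innerZ_zero_right {n : ℕ} {α : Fin n → ℕ} (u : Amb n α) : innerZ u 0 = 0 :=
  map_zero (innerZRight u)

lemma innerZ_neg_right {n : ℕ} {α : Fin n → ℕ} (u v : Amb n α) :
    innerZ u (-v) = -innerZ u v :=
  map_neg (innerZRight u) v

lemma innerZ_shiftT_shiftT {n : ℕ} {α : Fin n → ℕ} (u v : Amb n α) :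
    innerZ (shiftT u) (shiftT v) = innerZ u v := by
  unfold innerZ shiftT
  refine sum_congr rfl fun i _ => congrArg _ ?_
  exact Equiv.sum_comp (finRotate (α i)).symm
    (fun j => ((u i j).val : ZMod (2 ^ n)) * ((v i j).val : ZMod (2 ^ n)))

lemma shiftT_injective {n : ℕ} {α : Fin n → ℕ} : Function.Injective (shiftT (α := α)) :=
  fun u v h => funext fun i => funext fun j => by
    simpa only [shiftT, Equiv.symm_apply_apply] using congrFun (congrFun h i) (finRotate (α i) j)

theorem stmt_1_general (n : ℕ) (α : Fin n → ℕ)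
    (C : Set (Amb n α))
    (hT : ∀ u, u ∈ C → shiftT u ∈ C) :
    (0 : Amb n α) ∈ {v | ∀ u ∈ C, innerZ u v = 0} ∧
    (∀ v w, v ∈ {v | ∀ u ∈ C, innerZ u v = 0} → w ∈ {v | ∀ u ∈ C, innerZ u v = 0} →
      v + w ∈ {v | ∀ u ∈ C, innerZ u v = 0}) ∧
    (∀ v, v ∈ {v | ∀ u ∈ C, innerZ u v = 0} → -v ∈ {v | ∀ u ∈ C, innerZ u v = 0}) ∧
    (∀ v, v ∈ {v | ∀ u ∈ C, innerZ u v = 0} → shiftT v ∈ {v | ∀ u ∈ C, innerZ u v = 0}) := by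
  have hsurj : Set.SurjOn shiftT C C :=
    ((C.toFinite.injOn_iff_bijOn_of_mapsTo hT).1 shiftT_injective.injOn).surjOn
  refine ⟨fun u _ => innerZ_zero_right u, ?_, ?_, ?_⟩
  · intro v w hv hw u hu
    rw [innerZ_add_right, hv u hu, hw u hu, add_zero]
  · intro v hv u hu
    rw [innerZ_neg_right, hv u hu, neg_zero]
  · intro v hv u hu
    obtain ⟨w, hw, rfl⟩ := hsurj hu
    rw [innerZ_shiftT_shiftT, hv w hw]

/-- if `C` is an additive cyclic code (an additive subgroup closed under
the shift `T`), then its dual `C^⊥` is also an additive subgroup closed under `T`. -/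
theorem stmt_1 (n : ℕ) (hn : 1 ≤ n) (α : Fin n → ℕ) (hα : ∀ i, 0 < α i)
    (C : Set (Amb n α)) (h0 : 0 ∈ C)
    (hadd : ∀ u v, u ∈ C → v ∈ C → u + v ∈ C)
    (hneg : ∀ u, u ∈ C → -u ∈ C)
    (hT : ∀ u, u ∈ C → shiftT u ∈ C) :
    (0 : Amb n α) ∈ {v | ∀ u ∈ C, innerZ u v = 0} ∧
    (∀ v w, v ∈ {v | ∀ u ∈ C, innerZ u v = 0} → w ∈ {v | ∀ u ∈ C, innerZ u v = 0} →
      v + w ∈ {v | ∀ u ∈ C, innerZ u v = 0}) ∧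
    (∀ v, v ∈ {v | ∀ u ∈ C, innerZ u v = 0} → -v ∈ {v | ∀ u ∈ C, innerZ u v = 0}) ∧
    (∀ v, v ∈ {v | ∀ u ∈ C, innerZ u v = 0} → shiftT v ∈ {v | ∀ u ∈ C, innerZ u v = 0}) :=
  stmt_1_general n α C hT
end

section
/- Let q ≥ 1 and let φ: Z_{2q} → Z_2^q be the Gray map. Then for all a, b ∈ Z_{2q}: wt_H(φ(a)) = wt_L(a), and d_H(φ(a), φ(b)) = d_L(a, b); that is, φ is an isometry from Z_{2q} with the Lee distance onto its image in Z_2^q with the Hamming distance. In particular φ is injective. -/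
/-- The Gray map `φ : Z_{2q} → Z_2^q`: `j` with `0 ≤ j ≤ q` goes to the vector whose
last `j` coordinates are `1`, and `q + j` with `0 ≤ j ≤ q−1` goes to the vector whose
first `q − j` coordinates are `1` and last `j` coordinates are `0`. -/
def grayMap (q : ℕ) (a : ZMod (2 * q)) : Fin q → ZMod 2 :=
  fun k =>
    if a.val ≤ q then (if q - a.val ≤ k.1 then 1 else 0)
    else (if k.1 < 2 * q - a.val then 1 else 0)

/-- Hamming weight of a vector: the number of nonzero coordinates. -/
def hamWt {m M : ℕ} (x : Fin m → ZMod M) : ℕ :=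
  (Finset.univ.filter fun j => x j ≠ 0).card

/-- Lee weight on `Z_M`: `min(a, M − a)`, lifting `a` to `{0, …, M−1}`. -/
def leeWt {M : ℕ} (a : ZMod M) : ℕ := min a.val (M - a.val)

lemma gray_xor (P Q : Prop) [Decidable P] [Decidable Q] :
    ((if P then (1 : ZMod 2) else 0) - (if Q then 1 else 0) ≠ 0) ↔ ¬(P ↔ Q) := by
  by_cases hP : P <;> by_cases hQ : Q <;> simp [hP, hQ]

lemma fin_filter_card {q : ℕ} (p : ℕ → Prop) [DecidablePred p] :
    (Finset.univ.filter (fun k : Fin q => p k.1)).card = ((Finset.range q).filter p).card := by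
  apply Finset.card_bij (fun k _ => k.1)
  · intro k hk; simp_all [Finset.mem_filter]
  · intro a ha b hb h; exact Fin.ext h
  · intro n hn
    simp only [Finset.mem_filter, Finset.mem_range] at hn
    exact ⟨⟨n, hn.1⟩, by simp [hn.2], rfl⟩

lemma gray_dist (q : ℕ) (hq : 1 ≤ q) (a b : ZMod (2 * q)) :
    hamWt (grayMap q a - grayMap q b) = leeWt (a - b) := by
  haveI : NeZero (2 * q) := ⟨by omega⟩
  have hva := ZMod.val_lt a
  have hvb := ZMod.val_lt b
  have hWlt := ZMod.val_lt (a - b)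
  have hcast : (a - b) = ((a.val + 2 * q - b.val : ℕ) : ZMod (2 * q)) := by
    rw [Nat.cast_sub (by omega : b.val ≤ a.val + 2 * q), Nat.cast_add, ZMod.natCast_self,
      ZMod.natCast_val, ZMod.natCast_val, ZMod.cast_id, ZMod.cast_id]
    ring
  have hW : (a - b).val = (a.val + 2 * q - b.val) % (2 * q) := by
    rw [hcast, ZMod.val_natCast]
  have hWcases : (a - b).val = a.val + 2 * q - b.val ∨
      (a - b).val + 2 * q = a.val + 2 * q - b.val := by
    rcases Nat.lt_or_ge (a.val + 2 * q - b.val) (2 * q) with h | h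
    · left; rw [hW, Nat.mod_eq_of_lt h]
    · right
      rw [hW, Nat.mod_eq_sub_mod h, Nat.mod_eq_of_lt (by omega)]
      omega
  have hlee : leeWt (a - b) = min (a - b).val (2 * q - (a - b).val) := rfl
  rw [hlee]
  by_cases ha : a.val ≤ q <;> by_cases hb : b.val ≤ q <;>
    simp only [hamWt, grayMap, Pi.sub_apply, ha, hb, if_true, if_false, gray_xor]
  · rw [fin_filter_card (fun n => ¬(q - a.val ≤ n ↔ q - b.val ≤ n))]
    have hset : ((Finset.range q).filter fun n => ¬(q - a.val ≤ n ↔ q - b.val ≤ n)) =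
        Finset.Ico (min (q - a.val) (q - b.val)) (max (q - a.val) (q - b.val)) := by
      ext n; simp only [Finset.mem_filter, Finset.mem_range, Finset.mem_Ico]; omega
    rw [hset, Nat.card_Ico]
    omega
  · rw [fin_filter_card (fun n => ¬(q - a.val ≤ n ↔ n < 2 * q - b.val))]
    have hset : ((Finset.range q).filter fun n => ¬(q - a.val ≤ n ↔ n < 2 * q - b.val)) =
        Finset.Ico 0 (min (q - a.val) (2 * q - b.val)) ∪
          Finset.Ico (max (q - a.val) (2 * q - b.val)) q := by
      ext n; simp only [Finset.mem_filter, Finset.mem_range, Finset.mem_union, Finset.mem_Ico]; omega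
    rw [hset, Finset.card_union_of_disjoint, Nat.card_Ico, Nat.card_Ico]
    · omega
    · rw [Finset.disjoint_left]; intro x hx hx'
      simp only [Finset.mem_Ico] at hx hx'; omega
  · rw [fin_filter_card (fun n => ¬(n < 2 * q - a.val ↔ q - b.val ≤ n))]
    have hset : ((Finset.range q).filter fun n => ¬(n < 2 * q - a.val ↔ q - b.val ≤ n)) =
        Finset.Ico 0 (min (q - b.val) (2 * q - a.val)) ∪
          Finset.Ico (max (q - b.val) (2 * q - a.val)) q := by
      ext n; simp only [Finset.mem_filter, Finset.mem_range, Finset.mem_union, Finset.mem_Ico]; omega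
    rw [hset, Finset.card_union_of_disjoint, Nat.card_Ico, Nat.card_Ico]
    · omega
    · rw [Finset.disjoint_left]; intro x hx hx'
      simp only [Finset.mem_Ico] at hx hx'; omega
  · rw [fin_filter_card (fun n => ¬(n < 2 * q - a.val ↔ n < 2 * q - b.val))]
    have hset : ((Finset.range q).filter fun n => ¬(n < 2 * q - a.val ↔ n < 2 * q - b.val)) =
        Finset.Ico (min (2 * q - a.val) (2 * q - b.val)) (max (2 * q - a.val) (2 * q - b.val)) := by
      ext n; simp only [Finset.mem_filter, Finset.mem_range, Finset.mem_Ico]; omega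
    rw [hset, Nat.card_Ico]
    omega

/-- the Gray map is a weight-preserving isometry from `(Z_{2q}, d_L)`
onto its image in `(Z_2^q, d_H)`; in particular it is injective. -/
theorem stmt_7 (q : ℕ) (hq : 1 ≤ q) :
    (∀ a : ZMod (2 * q), hamWt (grayMap q a) = leeWt a) ∧
    (∀ a b : ZMod (2 * q),
      hamWt (grayMap q a - grayMap q b) = leeWt (a - b)) ∧
    Function.Injective (grayMap q) := by
  haveI : NeZero (2 * q) := ⟨by omega⟩
  have h0 : grayMap q 0 = 0 := by
    funext k
    have hk := k.isLt
    simp only [grayMap, ZMod.val_zero, Nat.zero_le, if_true, Nat.sub_zero, Pi.zero_apply,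
      ite_eq_right_iff]
    intro h; omega
  refine ⟨fun a => ?_, gray_dist q hq, fun a b h => ?_⟩
  · have hd := gray_dist q hq a 0
    rw [h0, sub_zero, sub_zero] at hd
    exact hd
  · have hd := gray_dist q hq a b
    rw [h, sub_self] at hd
    have h0' : hamWt (0 : Fin q → ZMod 2) = 0 := by simp [hamWt]
    rw [h0'] at hd
    have hval : (a - b).val = 0 := by
      have hlt := ZMod.val_lt (a - b)
      have hmin : min (a - b).val (2 * q - (a - b).val) = 0 := hd.symm
      omega
    have : a - b = 0 := (ZMod.val_eq_zero _).mp hval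
    exact sub_eq_zero.mp this
end

section
/- Let T be the simultaneous cyclic shift on ∏_{i=1}^n Z_{2^i}^{α_i} and let k = lcm(α_1, …, α_n). Then for all u, v ∈ ∏_{i=1}^n Z_{2^i}^{α_i}, one has T^{k−1}(v) · u = v · T(u), where · is the inner product u·v = [Σ_{i=1}^n 2^{n−i} Σ_{j=1}^{α_i} u_{ij} v_{ij}] mod 2^n. -/
/-!
Since every block length `α i` divides `k = lcm α`, the `(k-1)`-st power of the shift is its
inverse, i.e. the backward shift. The statement is therefore the adjointness `T⁻¹ v · u = v · T u`,
which holds block by block because the inner product of a block is invariant under permuting the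
coordinates of both factors simultaneously.
-/

open Equiv Fin.CommRing

lemma inv_pow_pred_eq_self {G : Type*} [Group G] {g : G} {k : ℕ} (hk : 0 < k) (h : g ^ k = 1) :
    g⁻¹ ^ (k - 1) = g := by
  obtain ⟨l, rfl⟩ := Nat.exists_eq_add_of_lt hk
  rw [zero_add] at h ⊢
  rw [Nat.add_sub_cancel, inv_pow, inv_eq_iff_mul_eq_one, ← pow_succ, h]

lemma finRotate_succ_pow_apply (m k : ℕ) (j : Fin (m + 1)) :
    (finRotate (m + 1) ^ k) j = j + (k : Fin (m + 1)) := by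
  induction k with
  | zero => simp
  | succ k ih =>
    rw [pow_succ', Perm.mul_apply, ih, finRotate_apply]
    push_cast
    ring

lemma finRotate_pow_eq_one_of_dvd {m k : ℕ} (h : m ∣ k) : finRotate m ^ k = 1 := by
  rcases m with _ | m
  · exact Subsingleton.elim _ _
  · ext j
    rw [finRotate_succ_pow_apply, Fin.natCast_eq_zero.2 h, add_zero, Perm.one_apply]

section Shift

variable {n : ℕ} {α : Fin n → ℕ}

lemma shiftT_iterate_apply (v : Amb n α) (m : ℕ) (i : Fin n) (j : Fin (α i)) :
    (shiftT^[m] v) i j = v i (((finRotate (α i))⁻¹ ^ m) j) := by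
  induction m generalizing j with
  | zero => rfl
  | succ m ih =>
    rw [Function.iterate_succ_apply', pow_succ (finRotate (α i))⁻¹, Perm.mul_apply, ← ih]
    rfl

lemma shiftT_iterate_lcm_pred (hα : ∀ i, 0 < α i) (v : Amb n α) :
    shiftT^[Finset.univ.lcm α - 1] v = fun i j => v i (finRotate (α i) j) := by
  have hlcm : 0 < Finset.univ.lcm α :=
    Nat.pos_of_ne_zero fun h => by
      obtain ⟨i, -, hi⟩ := Finset.lcm_eq_zero_iff.1 h
      exact (hα i).ne' hi
  funext i j
  rw [shiftT_iterate_apply, inv_pow_pred_eq_self hlcm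
    (finRotate_pow_eq_one_of_dvd (Finset.dvd_lcm (Finset.mem_univ i)))]

lemma innerZ_shiftT_right (u v : Amb n α) :
    innerZ v (shiftT u) = innerZ (fun i j => v i (finRotate (α i) j)) u := by
  refine Finset.sum_congr rfl fun i _ => congrArg _ ?_
  rw [← Equiv.sum_comp (finRotate (α i))]
  simp only [shiftT, symm_apply_apply]

end Shift

theorem stmt_11_general (n : ℕ) (α : Fin n → ℕ) (hα : ∀ i, 0 < α i)
    (u v : Amb n α) :
    innerZ (shiftT^[Finset.univ.lcm α - 1] v) u = innerZ v (shiftT u) := by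
  rw [shiftT_iterate_lcm_pred hα, innerZ_shiftT_right]

/-- with `k = lcm(α_1, …, α_n)`, `T^{k−1}(v) · u = v · T(u)`. -/
theorem stmt_11 (n : ℕ) (hn : 1 ≤ n) (α : Fin n → ℕ) (hα : ∀ i, 0 < α i)
    (u v : Amb n α) :
    innerZ (shiftT^[Finset.univ.lcm α - 1] v) u = innerZ v (shiftT u) :=
  stmt_11_general n α hα u v
end
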